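/- arXiv:2311.06434 — 3 statements merged into one kernel-verified Lean document; each statement's English description precedes it below -/
import Mathlib

section
/- With notation as above (S - r = (S₀ - r)e^{-βJ}), if J(x,t) → ∞ as t → ∞ uniformly below by (β_m/c₁)∫₁^t I(x₁,τ)dτ → ∞ for some fixed x₁, then ‖S(·,t) - r‖_{L^∞(Ω)} ≤ ‖S₀ - r‖_{L^∞(Ω)} e^{-(β_m/c₁)∫₁^t I(x₁,τ)dτ} → 0 as t → ∞. -/
/-! By the Harnack inequality, for `t ≥ 1` the exposure `∫₀ᵗ I(x,·)` at any point dominates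
`(1/c₁) ∫₁ᵗ I(x₁,·)`, so `β(x) ∫₀ᵗ I(x,·) ≥ (β_m/c₁) ∫₁ᵗ I(x₁,·)` uniformly in `x`; inserting this in
the explicit formula for `S - r` gives the uniform exponential bound, which tends to `0` because
`∫₁ᵗ I(x₁,·)` diverges. -/

open MeasureTheory Filter Topology Set

lemma intervalIntegral_le_const_mul_of_le_const_mul {f g : ℝ → ℝ} {a b c : ℝ} (hab : a ≤ b)
    (hf : Continuous f) (hg : Continuous g) (hfg : ∀ s ∈ Icc a b, f s ≤ c * g s) :
    ∫ s in a..b, f s ≤ c * ∫ s in a..b, g s := by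
  rw [← intervalIntegral.integral_const_mul]
  exact intervalIntegral.integral_mono_on hab (hf.intervalIntegrable _ _)
    ((continuous_const.mul hg).intervalIntegrable _ _) hfg

lemma abs_mul_exp_neg_mul_le {a M b J k L : ℝ} (ha : |a| ≤ M) (hkL : k * L ≤ b * J) :
    |a * Real.exp (-b * J)| ≤ M * Real.exp (-k * L) := by
  rw [abs_mul, abs_of_pos (Real.exp_pos _)]
  exact mul_le_mul ha (Real.exp_le_exp.2 (by linarith)) (Real.exp_nonneg _)
    ((abs_nonneg a).trans ha)

lemma tendsto_const_mul_exp_neg_mul_nhds_zero {α : Type*} {l : Filter α} {f : α → ℝ} {k : ℝ}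
    (hk : 0 < k) (hf : Tendsto f l atTop) (M : ℝ) :
    Tendsto (fun t => M * Real.exp (-k * f t)) l (𝓝 0) := by
  have hexp : Tendsto (fun t => Real.exp (-k * f t)) l (𝓝 0) := by
    refine Real.tendsto_exp_atBot.comp ?_
    simpa only [neg_mul, Function.comp_def] using tendsto_neg_atTop_atBot.comp (hf.const_mul_atTop hk)
  simpa only [mul_zero] using hexp.const_mul M

lemma mul_integral_le_mul_integral_of_harnack {X : Type*} (β : X → ℝ) (I : X → ℝ → ℝ)
    {βm c₁ : ℝ} (hβm : 0 < βm) (hc₁ : 0 < c₁) (hβ : ∀ x, βm ≤ β x)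
    (hI : ∀ x τ, 0 ≤ I x τ) (hIc : ∀ x, Continuous (I x))
    (hHarnack : ∀ τ ≥ (1:ℝ), ∀ x y, I x τ ≤ c₁ * I y τ)
    (x₁ x : X) {τ : ℝ} (hτ : 1 ≤ τ) :
    (βm / c₁) * ∫ s in (1:ℝ)..τ, I x₁ s ≤ β x * ∫ s in (0:ℝ)..τ, I x s := by
  have hharnack : ∫ s in (1:ℝ)..τ, I x₁ s ≤ c₁ * ∫ s in (1:ℝ)..τ, I x s :=
    intervalIntegral_le_const_mul_of_le_const_mul hτ (hIc x₁) (hIc x)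
      fun s hs => hHarnack s hs.1 x₁ x
  have hnonneg : 0 ≤ ∫ s in (1:ℝ)..τ, I x s :=
    intervalIntegral.integral_nonneg hτ fun s _ => hI x s
  have hmono : ∫ s in (1:ℝ)..τ, I x s ≤ ∫ s in (0:ℝ)..τ, I x s :=
    intervalIntegral.integral_mono_interval zero_le_one hτ le_rfl
      (Eventually.of_forall (hI x)) ((hIc x).intervalIntegrable _ _)
  calc (βm / c₁) * ∫ s in (1:ℝ)..τ, I x₁ s
      ≤ (βm / c₁) * (c₁ * ∫ s in (1:ℝ)..τ, I x s) := by gcongr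
    _ = βm * ∫ s in (1:ℝ)..τ, I x s := by field_simp
    _ ≤ β x * ∫ s in (0:ℝ)..τ, I x s := by
      gcongr
      · exact hβm.le.trans (hβ x)
      · exact hβ x

theorem stmt_3_general {X : Type*} (β r S₀ : X → ℝ) (S I : X → ℝ → ℝ)
    (βm c₁ : ℝ) (x₁ : X)
    (hβm : 0 < βm) (hc₁ : 0 < c₁)
    (hβ : ∀ x, βm ≤ β x)
    (hI : ∀ x τ, 0 ≤ I x τ)
    (hIc : ∀ x, Continuous (I x))
    (hHarnack : ∀ τ ≥ (1:ℝ), ∀ x y, I x τ ≤ c₁ * I y τ)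
    (hform : ∀ x, ∀ τ ≥ (0:ℝ),
      S x τ - r x = (S₀ x - r x) * Real.exp (-(β x) * ∫ s in (0:ℝ)..τ, I x s))
    (hbdd : BddAbove (Set.range fun x => |S₀ x - r x|))
    (hdiv : Tendsto (fun τ => ∫ s in (1:ℝ)..τ, I x₁ s) atTop atTop) :
    (∀ τ ≥ (1:ℝ), ∀ x, |S x τ - r x| ≤
      (⨆ y, |S₀ y - r y|) * Real.exp (-(βm / c₁) * ∫ s in (1:ℝ)..τ, I x₁ s)) ∧
    Tendsto (fun τ => (⨆ y, |S₀ y - r y|) *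
      Real.exp (-(βm / c₁) * ∫ s in (1:ℝ)..τ, I x₁ s)) atTop (𝓝 0) := by
  refine ⟨fun τ hτ x => ?_,
    tendsto_const_mul_exp_neg_mul_nhds_zero (div_pos hβm hc₁) hdiv _⟩
  rw [hform x τ (zero_le_one.trans hτ)]
  exact abs_mul_exp_neg_mul_le (le_ciSup hbdd x)
    (mul_integral_le_mul_integral_of_harnack β I hβm hc₁ hβ hI hIc hHarnack x₁ x hτ)

theorem stmt_3 {X : Type*} [Nonempty X] (β r S₀ : X → ℝ) (S I : X → ℝ → ℝ)
    (βm c₁ : ℝ) (x₁ : X)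
    (hβm : 0 < βm) (hc₁ : 0 < c₁)
    (hβ : ∀ x, βm ≤ β x)
    (hI : ∀ x τ, 0 ≤ I x τ)
    (hIc : ∀ x, Continuous (I x))
    (hHarnack : ∀ τ ≥ (1:ℝ), ∀ x y, I x τ ≤ c₁ * I y τ)
    (hform : ∀ x, ∀ τ ≥ (0:ℝ),
      S x τ - r x = (S₀ x - r x) * Real.exp (-(β x) * ∫ s in (0:ℝ)..τ, I x s))
    (hbdd : BddAbove (Set.range fun x => |S₀ x - r x|))
    (hdiv : Tendsto (fun τ => ∫ s in (1:ℝ)..τ, I x₁ s) atTop atTop) :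
    (∀ τ ≥ (1:ℝ), ∀ x, |S x τ - r x| ≤
      (⨆ y, |S₀ y - r y|) * Real.exp (-(βm / c₁) * ∫ s in (1:ℝ)..τ, I x₁ s)) ∧
    Tendsto (fun τ => (⨆ y, |S₀ y - r y|) *
      Real.exp (-(βm / c₁) * ∫ s in (1:ℝ)..τ, I x₁ s)) atTop (𝓝 0) :=
  stmt_3_general β r S₀ S I βm c₁ x₁ hβm hc₁ hβ hI hIc hHarnack hform hbdd hdiv
end

section
/- Suppose λ_k ∈ C(Ω̄;[0,1]) satisfy ∫_Ω β λ_k (S₀ - r) dx ≤ 0 for all k and ∫_Ω (λ_k S₀ + (1-λ_k) r) dx → ∫_Ω max{S₀,r} dx as k → ∞. If the set {S₀ > r} has positive measure, then a contradiction arises; hence the supremum N*_{S₀,r} is strictly less than ∫_Ω max{S₀,r} dx whenever (S₀-r)₊ ≢ 0. -/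
open MeasureTheory Filter Topology Set

/-- `N*_{S₀,r}` where the eigenvalue condition `σ(d_I, βλ(S₀-r)) ≤ 0` is expressed through
the necessary integral condition `∫_Ω β λ (S₀ - r) ≤ 0` used in this statement. -/
noncomputable def NstarInt {n : ℕ} (Ω : Set (EuclideanSpace ℝ (Fin n)))
    (β S₀ r : EuclideanSpace ℝ (Fin n) → ℝ) : ℝ :=
  sSup {N : ℝ | ∃ lam : EuclideanSpace ℝ (Fin n) → ℝ,
    ContinuousOn lam (closure Ω) ∧ (∀ x, 0 ≤ lam x ∧ lam x ≤ 1) ∧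
    (∫ x in Ω, β x * lam x * (S₀ x - r x)) ≤ 0 ∧
    N = ∫ x in Ω, (lam x * S₀ x + (1 - lam x) * r x)}

theorem key_nonexist {n : ℕ} (Ω : Set (EuclideanSpace ℝ (Fin n)))
    (hΩ : MeasurableSet Ω) (hΩb : Bornology.IsBounded Ω) (hΩne : volume Ω ≠ 0)
    (β S₀ r : EuclideanSpace ℝ (Fin n) → ℝ)
    (hβc : ContinuousOn β (closure Ω)) (hS₀c : ContinuousOn S₀ (closure Ω))
    (hrc : ContinuousOn r (closure Ω))
    (hβpos : ∀ x ∈ closure Ω, 0 < β x)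
    (hpos : 0 < volume {x ∈ Ω | r x < S₀ x}) :
    ¬ ∃ lam : ℕ → EuclideanSpace ℝ (Fin n) → ℝ,
      (∀ k, ContinuousOn (lam k) (closure Ω) ∧ (∀ x, 0 ≤ lam k x ∧ lam k x ≤ 1) ∧
        (∫ x in Ω, β x * lam k x * (S₀ x - r x)) ≤ 0) ∧
      Tendsto (fun k => ∫ x in Ω, (lam k x * S₀ x + (1 - lam k x) * r x)) atTop
        (𝓝 (∫ x in Ω, max (S₀ x) (r x))) := by
  rintro ⟨lam, hlam, htend⟩
  have hK : IsCompact (closure Ω) := hΩb.isCompact_closure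
  have hKne : (closure Ω).Nonempty := (nonempty_of_measure_ne_zero hΩne).closure
  set gp : EuclideanSpace ℝ (Fin n) → ℝ := fun x => max (S₀ x - r x) 0 with hgp
  set gm : EuclideanSpace ℝ (Fin n) → ℝ := fun x => min (S₀ x - r x) 0 with hgm
  have hInt : ∀ f : EuclideanSpace ℝ (Fin n) → ℝ, ContinuousOn f (closure Ω) →
      IntegrableOn f Ω volume := fun f hf =>
    (hf.integrableOn_compact hK).mono_set subset_closure
  have hgpc : ContinuousOn gp (closure Ω) := (hS₀c.sub hrc).sup continuousOn_const
  have hgmc : ContinuousOn gm (closure Ω) := (hS₀c.sub hrc).inf continuousOn_const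
  obtain ⟨x₀, hx₀, hmin⟩ := hK.exists_isMinOn hKne hβc
  obtain ⟨x₁, hx₁, hmax⟩ := hK.exists_isMaxOn hKne hβc
  set c := β x₀ with hcdef
  set C := β x₁ with hCdef
  have hc : 0 < c := hβpos x₀ hx₀
  have hcle : ∀ x ∈ closure Ω, c ≤ β x := fun x hx => hmin hx
  have hCle : ∀ x ∈ closure Ω, β x ≤ C := fun x hx => hmax hx
  have hlc : ∀ k, ContinuousOn (lam k) (closure Ω) := fun k => (hlam k).1
  have hbd : ∀ k x, 0 ≤ lam k x ∧ lam k x ≤ 1 := fun k => (hlam k).2.1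
  have hintr := hInt r hrc
  have hintgp := hInt gp hgpc
  have hintlgp : ∀ k, IntegrableOn (fun x => lam k x * gp x) Ω volume :=
    fun k => hInt _ ((hlc k).mul hgpc)
  have hintlgm : ∀ k, IntegrableOn (fun x => lam k x * gm x) Ω volume :=
    fun k => hInt _ ((hlc k).mul hgmc)
  set L := ∫ x in Ω, gp x with hLdef
  set a : ℕ → ℝ := fun k => ∫ x in Ω, lam k x * gp x with hadef
  set b : ℕ → ℝ := fun k => ∫ x in Ω, lam k x * gm x with hbdef
  have hgpnn : ∀ x, 0 ≤ gp x := fun x => le_max_right _ _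
  have hgmnp : ∀ x, gm x ≤ 0 := fun x => min_le_right _ _
  have hpm : ∀ x, gp x + gm x = S₀ x - r x := fun x => by
    rcases le_total (S₀ x - r x) 0 with h | h
    · simp [hgp, hgm, max_eq_right h, min_eq_left h]
    · simp [hgp, hgm, max_eq_left h, min_eq_right h]
  -- L > 0
  have hLpos : 0 < L := by
    rw [hLdef, setIntegral_pos_iff_support_of_nonneg_ae
      (Filter.Eventually.of_forall hgpnn) hintgp]
    refine lt_of_lt_of_le hpos (measure_mono ?_)
    rintro x ⟨hxΩ, hxlt⟩
    refine ⟨?_, hxΩ⟩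
    have : 0 < gp x := lt_of_lt_of_le (sub_pos.mpr hxlt) (le_max_left _ _)
    exact this.ne'
  -- rewrite the sequence of integrals
  have hsum : ∀ k, (∫ x in Ω, (lam k x * S₀ x + (1 - lam k x) * r x))
      = (∫ x in Ω, r x) + (a k + b k) := by
    intro k
    calc (∫ x in Ω, (lam k x * S₀ x + (1 - lam k x) * r x))
        = ∫ x in Ω, (r x + (lam k x * gp x + lam k x * gm x)) := by
          refine setIntegral_congr_fun hΩ fun x hx => ?_
          linear_combination (lam k x) * (hpm x).symm
      _ = (∫ x in Ω, r x) + ∫ x in Ω, (lam k x * gp x + lam k x * gm x) :=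
          integral_add hintr ((hintlgp k).add (hintlgm k))
      _ = (∫ x in Ω, r x) + (a k + b k) := by
          rw [integral_add (hintlgp k) (hintlgm k)]
  have hI : (∫ x in Ω, max (S₀ x) (r x)) = (∫ x in Ω, r x) + L := by
    calc (∫ x in Ω, max (S₀ x) (r x)) = ∫ x in Ω, (r x + gp x) := by
          refine setIntegral_congr_fun hΩ fun x hx => ?_
          rcases le_total (S₀ x) (r x) with h | h
          · simp [hgp, max_eq_right h, max_eq_right (sub_nonpos.mpr h)]
          · simp [hgp, max_eq_left h, max_eq_left (sub_nonneg.mpr h)]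
      _ = (∫ x in Ω, r x) + L := integral_add hintr hintgp
  have hab : Tendsto (fun k => a k + b k) atTop (𝓝 L) := by
    have h := htend.sub_const (∫ x in Ω, r x)
    have hL : L = (∫ x in Ω, max (S₀ x) (r x)) - ∫ x in Ω, r x := by rw [hI]; ring
    rw [hL]
    exact h.congr fun k => by rw [hsum k]; ring
  have hale : ∀ k, a k ≤ L := by
    intro k
    refine setIntegral_mono_on (hintlgp k) hintgp hΩ fun x hx => ?_
    nlinarith [(hbd k x).1, (hbd k x).2, hgpnn x]
  have hble : ∀ k, b k ≤ 0 := by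
    intro k
    refine integral_nonpos fun x => ?_
    exact mul_nonpos_of_nonneg_of_nonpos (hbd k x).1 (hgmnp x)
  have hb0 : Tendsto b atTop (𝓝 0) := by
    have hlow : Tendsto (fun k => (a k + b k) - L) atTop (𝓝 0) := by
      simpa using hab.sub_const L
    refine tendsto_of_tendsto_of_tendsto_of_le_of_le hlow tendsto_const_nhds
      (fun k => by linarith [hale k]) hble
  have haL : Tendsto a atTop (𝓝 L) := by
    have := hab.sub hb0
    simpa using this.congr fun k => by ring
  -- lower bound on the beta integral
  have hkey : ∀ k, c * a k + C * b k ≤ 0 := by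
    intro k
    refine le_trans ?_ (hlam k).2.2
    have h1 : (∫ x in Ω, (c * (lam k x * gp x) + C * (lam k x * gm x)))
        = c * a k + C * b k := by
      rw [integral_add ((hintlgp k).const_mul c) ((hintlgm k).const_mul C),
        integral_const_mul, integral_const_mul]
    rw [← h1]
    refine setIntegral_mono_on
      (((hintlgp k).const_mul c).add ((hintlgm k).const_mul C))
      (hInt _ ((hβc.mul (hlc k)).mul (hS₀c.sub hrc))) hΩ fun x hx => ?_
    have hx' : x ∈ closure Ω := subset_closure hx
    have h2 : 0 ≤ lam k x * gp x := mul_nonneg (hbd k x).1 (hgpnn x)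
    have h3 : lam k x * gm x ≤ 0 :=
      mul_nonpos_of_nonneg_of_nonpos (hbd k x).1 (hgmnp x)
    have h4 : c * (lam k x * gp x) ≤ β x * (lam k x * gp x) :=
      mul_le_mul_of_nonneg_right (hcle x hx') h2
    have h5 : C * (lam k x * gm x) ≤ β x * (lam k x * gm x) :=
      mul_le_mul_of_nonpos_right (hCle x hx') h3
    have h6 : β x * (lam k x * gp x) + β x * (lam k x * gm x)
        = β x * lam k x * (S₀ x - r x) := by
      linear_combination (β x * lam k x) * (hpm x)
    linarith
  have hfin : Tendsto (fun k => c * a k + C * b k) atTop (𝓝 (c * L + C * 0)) :=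
    (haL.const_mul c).add (hb0.const_mul C)
  have := le_of_tendsto hfin (Filter.Eventually.of_forall hkey)
  nlinarith

theorem stmt_9 {n : ℕ} (Ω : Set (EuclideanSpace ℝ (Fin n)))
    (hΩ : MeasurableSet Ω) (hΩb : Bornology.IsBounded Ω) (hΩne : volume Ω ≠ 0)
    (β S₀ r : EuclideanSpace ℝ (Fin n) → ℝ)
    (hβc : ContinuousOn β (closure Ω)) (hS₀c : ContinuousOn S₀ (closure Ω))
    (hrc : ContinuousOn r (closure Ω))
    (hβpos : ∀ x ∈ closure Ω, 0 < β x) (hS₀pos : ∀ x ∈ closure Ω, 0 < S₀ x)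
    (hrpos : ∀ x ∈ closure Ω, 0 < r x)
    (hpos : 0 < volume {x ∈ Ω | r x < S₀ x}) :
    (¬ ∃ lam : ℕ → EuclideanSpace ℝ (Fin n) → ℝ,
      (∀ k, ContinuousOn (lam k) (closure Ω) ∧ (∀ x, 0 ≤ lam k x ∧ lam k x ≤ 1) ∧
        (∫ x in Ω, β x * lam k x * (S₀ x - r x)) ≤ 0) ∧
      Tendsto (fun k => ∫ x in Ω, (lam k x * S₀ x + (1 - lam k x) * r x)) atTop
        (𝓝 (∫ x in Ω, max (S₀ x) (r x)))) ∧
    NstarInt Ω β S₀ r < ∫ x in Ω, max (S₀ x) (r x) := by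
  constructor
  · exact key_nonexist Ω hΩ hΩb hΩne β S₀ r hβc hS₀c hrc hβpos hpos
  · have hK : IsCompact (closure Ω) := hΩb.isCompact_closure
    have hInt : ∀ f : EuclideanSpace ℝ (Fin n) → ℝ, ContinuousOn f (closure Ω) →
        IntegrableOn f Ω volume := fun f hf =>
      (hf.integrableOn_compact hK).mono_set subset_closure
    set SS := {N : ℝ | ∃ lam : EuclideanSpace ℝ (Fin n) → ℝ,
      ContinuousOn lam (closure Ω) ∧ (∀ x, 0 ≤ lam x ∧ lam x ≤ 1) ∧
      (∫ x in Ω, β x * lam x * (S₀ x - r x)) ≤ 0 ∧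
      N = ∫ x in Ω, (lam x * S₀ x + (1 - lam x) * r x)} with hSS
    have hNeq : NstarInt Ω β S₀ r = sSup SS := rfl
    have hmem : (∫ x in Ω, (((fun _ => (0:ℝ)) x) * S₀ x + (1 - (fun _ => (0:ℝ)) x) * r x)) ∈ SS :=
      ⟨fun _ => 0, continuousOn_const, fun x => ⟨le_refl 0, zero_le_one⟩, by simp, rfl⟩
    have hub : ∀ N ∈ SS, N ≤ ∫ x in Ω, max (S₀ x) (r x) := by
      rintro N ⟨lam, hlc, hbd, -, rfl⟩
      refine setIntegral_mono_on
        (hInt _ ((hlc.mul hS₀c).add ((continuousOn_const.sub hlc).mul hrc)))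
        (hInt _ (hS₀c.sup hrc)) hΩ fun x hx => ?_
      have h1 := (hbd x).1
      have h2 := (hbd x).2
      have h3 := le_max_left (S₀ x) (r x)
      have h4 := le_max_right (S₀ x) (r x)
      nlinarith
    have hle : NstarInt Ω β S₀ r ≤ ∫ x in Ω, max (S₀ x) (r x) := by
      rw [hNeq]; exact csSup_le ⟨_, hmem⟩ hub
    rcases lt_or_eq_of_le hle with h | h
    · exact h
    · exfalso
      obtain ⟨u, -, hutend, humem⟩ := exists_seq_tendsto_sSup (α := ℝ)
        (⟨_, hmem⟩ : SS.Nonempty) ⟨_, hub⟩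
      choose lamf hc1 hc2 hc3 hc4 using humem
      refine key_nonexist Ω hΩ hΩb hΩne β S₀ r hβc hS₀c hrc hβpos hpos
        ⟨lamf, fun k => ⟨hc1 k, hc2 k, hc3 k⟩, ?_⟩
      have : Tendsto u atTop (𝓝 (∫ x in Ω, max (S₀ x) (r x))) := by
        rw [← h, hNeq]; exact hutend
      exact this.congr fun k => hc4 k
end

section
/- Suppose I : Ω̄ × [t₁,∞) → [0,∞) satisfies the differential inequality ∂_t I ≤ γ(x) ((R(x)-1) S̄ - I) · I/(I + S̄) pointwise for t > t₁, where S̄ > 0 is a constant, R = β/γ, and γ ≥ γ_m > 0. Then limsup_{t→∞} I(x,t) ≤ (R(x) - 1)₊ S̄ for every x. -/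
open MeasureTheory Filter Topology Set

lemma aux_antitone (f f' : ℝ → ℝ) (a b : ℝ) (hab : a ≤ b)
    (hd : ∀ u ∈ Icc a b, HasDerivAt f (f' u) u)
    (h0 : ∀ u ∈ Ioo a b, f' u ≤ 0) : f b ≤ f a := by
  have hcont : ContinuousOn f (Icc a b) := fun u hu =>
    (hd u hu).continuousAt.continuousWithinAt
  have hdiff : DifferentiableOn ℝ f (interior (Icc a b)) := by
    rw [interior_Icc]
    exact fun u hu =>
      ((hd u (Ioo_subset_Icc_self hu)).differentiableAt).differentiableWithinAt
  have hA := antitoneOn_of_deriv_nonpos (convex_Icc a b) hcont hdiff ?_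
  · exact hA (left_mem_Icc.2 hab) (right_mem_Icc.2 hab) hab
  · intro u hu
    rw [interior_Icc] at hu
    rw [(hd u (Ioo_subset_Icc_self hu)).deriv]
    exact h0 u hu

theorem stmt_16 {X : Type*} (β γ : X → ℝ) (I I' : X → ℝ → ℝ)
    (Sb γm t₁ : ℝ) (hSb : 0 < Sb) (hγm : 0 < γm)
    (hγ : ∀ x, γm ≤ γ x) (hβ : ∀ x, 0 < β x)
    (hIpos : ∀ x t, 0 ≤ I x t)
    (hode : ∀ x, ∀ t > t₁, HasDerivAt (I x) (I' x t) t ∧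
      I' x t ≤ γ x * ((β x / γ x - 1) * Sb - I x t) * (I x t / (I x t + Sb))) :
    ∀ x, Filter.limsup (fun t => I x t) atTop ≤ max (β x / γ x - 1) 0 * Sb := by
  intro x
  set f : ℝ → ℝ := I x with hf
  set M : ℝ := max (β x / γ x - 1) 0 * Sb with hMdef
  have hM0 : 0 ≤ M := mul_nonneg (le_max_right _ _) hSb.le
  have hRM : (β x / γ x - 1) * Sb ≤ M :=
    mul_le_mul_of_nonneg_right (le_max_left _ _) hSb.le
  -- Main step: eventual bound
  have key : ∀ ε : ℝ, 0 < ε → ∀ᶠ t in atTop, f t ≤ M + ε := by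
    intro ε hε
    have hεSb : 0 < ε + Sb := by linarith
    set δ : ℝ := γm * ε * (ε / (ε + Sb)) with hδdef
    have hδ0 : 0 < δ := by positivity
    -- derivative bound when f is large
    have hder : ∀ t, t₁ < t → M + ε ≤ f t → I' x t ≤ -δ := by
      intro t ht hft
      obtain ⟨-, hle⟩ := hode x t ht
      have hftε : ε ≤ f t := by linarith
      have hB : (β x / γ x - 1) * Sb - f t ≤ -ε := by linarith
      have hC : ε / (ε + Sb) ≤ f t / (f t + Sb) := by
        rw [div_le_div_iff₀ hεSb (by linarith)]
        nlinarith
      have hC0 : 0 < ε / (ε + Sb) := by positivity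
      have hγx : γm ≤ γ x := hγ x
      have h1 : γ x * ((β x / γ x - 1) * Sb - f t) ≤ -(γm * ε) := by nlinarith
      have h2 : γ x * ((β x / γ x - 1) * Sb - f t) * (f t / (f t + Sb))
          ≤ -(γm * ε) * (ε / (ε + Sb)) := by
        calc γ x * ((β x / γ x - 1) * Sb - f t) * (f t / (f t + Sb))
            ≤ γ x * ((β x / γ x - 1) * Sb - f t) * (ε / (ε + Sb)) := by
              apply mul_le_mul_of_nonpos_left hC
              nlinarith
          _ ≤ -(γm * ε) * (ε / (ε + Sb)) :=
              mul_le_mul_of_nonneg_right h1 hC0.le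
      calc I' x t ≤ _ := hle
        _ ≤ -(γm * ε) * (ε / (ε + Sb)) := h2
        _ = -δ := by ring
    -- Step 1 : some time with f ≤ M + ε
    have step1 : ∃ t₀, t₁ < t₀ ∧ f t₀ ≤ M + ε := by
      by_contra h
      push_neg at h
      set a : ℝ := t₁ + 1 with ha
      have hat : t₁ < a := by linarith
      set T : ℝ := a + (f a + 1) / δ with hT
      have hfa0 : 0 ≤ f a := hIpos x a
      have haT : a ≤ T := by
        have h2 : 0 ≤ (f a + 1) / δ := by positivity
        rw [hT]
        linarith
      have hanti := aux_antitone (fun u => f u + δ * u) (fun u => I' x u + δ * 1)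
        a T haT ?_ ?_
      · have hdiv : δ * ((f a + 1) / δ) = f a + 1 := mul_div_cancel₀ _ hδ0.ne'
        have hfT0 : 0 ≤ f T := hIpos x T
        simp only [hT] at hanti
        nlinarith
      · intro u hu
        have hu1 : t₁ < u := lt_of_lt_of_le hat hu.1
        exact ((hode x u hu1).1).add ((hasDerivAt_id u).const_mul δ)
      · intro u hu
        have hu1 : t₁ < u := lt_of_lt_of_le hat hu.1.le
        have := hder u hu1 (h u hu1).le
        show I' x u + δ * 1 ≤ 0
        linarith
    -- Step 2 : invariance afterwards
    obtain ⟨t₀, ht₀, hft₀⟩ := step1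
    filter_upwards [eventually_ge_atTop t₀] with t ht
    by_contra hft
    push_neg at hft
    have hcont : ContinuousOn f (Icc t₀ t) := fun u hu =>
      ((hode x u (lt_of_lt_of_le ht₀ hu.1)).1).continuousAt.continuousWithinAt
    set A : Set ℝ := Icc t₀ t ∩ f ⁻¹' Iic (M + ε) with hA
    have hclosed : IsClosed A :=
      hcont.preimage_isClosed_of_isClosed isClosed_Icc isClosed_Iic
    have hne : A.Nonempty := ⟨t₀, ⟨le_refl _, ht⟩, hft₀⟩
    have hbdd : BddAbove A := ⟨t, fun u hu => hu.1.2⟩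
    set s : ℝ := sSup A with hs
    have hsA : s ∈ A := hclosed.csSup_mem hne hbdd
    have hst : s ≤ t := hsA.1.2
    have ht₀s : t₀ ≤ s := hsA.1.1
    have hfs : f s ≤ M + ε := hsA.2
    have hslt : s < t := lt_of_le_of_ne hst (fun h => by rw [h] at hfs; linarith)
    have hbig : ∀ u, s < u → u ≤ t → M + ε < f u := by
      intro u hsu hut
      by_contra hc
      push_neg at hc
      have : u ∈ A := ⟨⟨le_trans ht₀s hsu.le, hut⟩, hc⟩
      exact absurd (le_csSup hbdd this) (not_le.2 hsu)
    have := aux_antitone f (I' x) s t hst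
      (fun u hu => (hode x u (lt_of_lt_of_le ht₀ (le_trans ht₀s hu.1))).1)
      (fun u hu => by
        have := hder u (lt_of_lt_of_le ht₀ (le_trans ht₀s hu.1.le))
          (hbig u hu.1 hu.2.le).le
        linarith)
    linarith
  -- conclude via limsup
  have hcb : IsCoboundedUnder (· ≤ ·) atTop f :=
    isCoboundedUnder_le_of_le atTop (x := 0) (fun t => hIpos x t)
  refine le_of_forall_pos_le_add fun ε hε => ?_
  exact Filter.limsup_le_of_le hcb (key ε hε)
end
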